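/- arXiv:1905.11183 — 3 statements merged into one kernel-verified Lean document; each statement's English description precedes it below -/
import Mathlib

section
/- For all positive integers i and j, the sum of μ*(d) over unitary divisors d of j such that i is a unitary divisor of j/d equals 1 if i = j and 0 otherwise. -/
/-- `d` is a unitary divisor of `j`: `d ∣ j` and `gcd(d, j/d) = 1`. -/
def UnitaryDvd (d j : ℕ) : Prop := d ∣ j ∧ Nat.Coprime d (j / d)

instance : ∀ d j, Decidable (UnitaryDvd d j) := fun _ _ => instDecidableAnd

/-- The unitary Möbius function `μ*(n) = (-1)^{ω(n)}`. -/
noncomputable def mustar (n : ℕ) : ℤ := (-1) ^ n.primeFactors.card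

/-!
Both conditions `d ∥ j` and `i ∥ j / d` say that `j = d * i * m` with `d`, `i`, `m` pairwise
coprime, a condition symmetric in `d` and `i`. So the sum runs over the unitary divisors `d` of
`j / i` when `i ∥ j`, and is empty otherwise. The unitary divisors of `n` are the products
`∏ p ∈ S, p ^ v_p(n)` for `S ⊆ primeFactors n`, so `∑_{d ∥ n} μ*(d) = ∑_{S} (-1)^#S`, which
vanishes unless `n` has no prime factor.
-/

open Finset

theorem unitaryDvd_mul_right_iff {d m : ℕ} (hd : d ≠ 0) :
    UnitaryDvd d (d * m) ↔ d.Coprime m := by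
  simp [UnitaryDvd, Nat.mul_div_cancel_left m (Nat.pos_of_ne_zero hd)]

theorem unitaryDvd_self {n : ℕ} (hn : n ≠ 0) : UnitaryDvd n n := by
  simpa using (unitaryDvd_mul_right_iff (m := 1) hn).2 (Nat.coprime_one_right n)

theorem unitaryDvd_and_unitaryDvd_div_iff {d i j : ℕ} (hj : j ≠ 0) :
    UnitaryDvd d j ∧ UnitaryDvd i (j / d) ↔
      ∃ m, j = d * (i * m) ∧ d.Coprime i ∧ d.Coprime m ∧ i.Coprime m := by
  constructor
  · rintro ⟨hdj, hij⟩
    obtain ⟨k, rfl⟩ := hdj.1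
    have hd := left_ne_zero_of_mul hj
    have hi : i ≠ 0 := by rintro rfl; simp [UnitaryDvd] at hij
    rw [Nat.mul_div_cancel_left k (Nat.pos_of_ne_zero hd)] at hij
    obtain ⟨m, rfl⟩ := hij.1
    rw [unitaryDvd_mul_right_iff hd, Nat.coprime_mul_iff_right] at hdj
    exact ⟨m, rfl, hdj.1, hdj.2, (unitaryDvd_mul_right_iff hi).1 hij⟩
  · rintro ⟨m, rfl, hdi, hdm, him⟩
    have hd := left_ne_zero_of_mul hj
    have hi := left_ne_zero_of_mul (right_ne_zero_of_mul hj)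
    rw [unitaryDvd_mul_right_iff hd, Nat.mul_div_cancel_left _ (Nat.pos_of_ne_zero hd),
      unitaryDvd_mul_right_iff hi, Nat.coprime_mul_iff_right]
    exact ⟨⟨hdi, hdm⟩, him⟩

theorem unitaryDvd_and_unitaryDvd_div_comm {d i j : ℕ} (hj : j ≠ 0) :
    UnitaryDvd d j ∧ UnitaryDvd i (j / d) ↔ UnitaryDvd i j ∧ UnitaryDvd d (j / i) := by
  rw [unitaryDvd_and_unitaryDvd_div_iff hj, unitaryDvd_and_unitaryDvd_div_iff hj]
  refine exists_congr fun m => ?_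
  rw [mul_left_comm, Nat.coprime_comm]
  tauto

def unitaryDivisors (n : ℕ) : Finset ℕ := n.divisors.filter (UnitaryDvd · n)

theorem mem_unitaryDivisors {d n : ℕ} : d ∈ unitaryDivisors n ↔ UnitaryDvd d n ∧ n ≠ 0 := by
  rw [unitaryDivisors, mem_filter, Nat.mem_divisors]
  exact ⟨fun h => ⟨h.2, h.1.2⟩, fun h => ⟨⟨h.1.1, h.2⟩, h.1⟩⟩

theorem filter_divisors_unitaryDvd_of_dvd {m n : ℕ} (hmn : m ∣ n) (hn : n ≠ 0) :
    n.divisors.filter (UnitaryDvd · m) = unitaryDivisors m := by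
  ext d
  simp only [mem_filter, Nat.mem_divisors, mem_unitaryDivisors]
  exact ⟨fun h => ⟨h.2, ne_zero_of_dvd_ne_zero hn hmn⟩,
    fun h => ⟨⟨h.1.1.trans hmn, hn⟩, h.1⟩⟩

theorem UnitaryDvd.prod_primeFactors_ordProj {d n : ℕ} (h : UnitaryDvd d n) (hn : n ≠ 0) :
    ∏ p ∈ d.primeFactors, ordProj[p] n = d := by
  obtain ⟨m, rfl⟩ := h.1
  have hd := left_ne_zero_of_mul hn
  have hdm : d.Coprime m := (unitaryDvd_mul_right_iff hd).1 h
  conv_rhs => rw [Nat.prod_primeFactors_pow_factorization hd]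
  refine prod_congr rfl fun p hp => ?_
  have hpm : ¬p ∣ m := fun hpm =>
    (Nat.prime_of_mem_primeFactors hp).ne_one
      (Nat.eq_one_of_dvd_coprimes hdm (Nat.dvd_of_mem_primeFactors hp) hpm)
  rw [Nat.factorization_mul_of_coprime hdm, Finsupp.add_apply,
    Nat.factorization_eq_zero_of_not_dvd hpm, add_zero]

theorem unitaryDvd_prod_ordProj {n : ℕ} {S : Finset ℕ} (hS : S ⊆ n.primeFactors) (hn : n ≠ 0) :
    UnitaryDvd (∏ p ∈ S, ordProj[p] n) n := by
  have hsplit : (∏ p ∈ S, ordProj[p] n) * ∏ p ∈ n.primeFactors \ S, ordProj[p] n = n := by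
    rw [mul_comm, prod_sdiff hS, ← Nat.prod_primeFactors_pow_factorization hn]
  have hcop : (∏ p ∈ S, ordProj[p] n).Coprime (∏ p ∈ n.primeFactors \ S, ordProj[p] n) :=
    Nat.Coprime.prod_left fun p hp => Nat.Coprime.prod_right fun q hq =>
      Nat.coprime_pow_primes _ _ (Nat.prime_of_mem_primeFactors (hS hp))
        (Nat.prime_of_mem_primeFactors (mem_sdiff.1 hq).1)
        (ne_of_mem_of_not_mem hp (mem_sdiff.1 hq).2)
  have hne : ∏ p ∈ S, ordProj[p] n ≠ 0 := prod_ne_zero_iff.2 fun p _ => (Nat.ordProj_pos n p).ne'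
  simpa only [hsplit] using (unitaryDvd_mul_right_iff hne).2 hcop

theorem primeFactors_prod_pow {S : Finset ℕ} {e : ℕ → ℕ} (h : ∀ p ∈ S, p.Prime ∧ e p ≠ 0) :
    (∏ p ∈ S, p ^ e p).primeFactors = S := by
  ext q
  have hne : ∏ p ∈ S, p ^ e p ≠ 0 :=
    prod_ne_zero_iff.2 fun p hp => pow_ne_zero _ (h p hp).1.ne_zero
  rw [Nat.mem_primeFactors_of_ne_zero hne]
  constructor
  · rintro ⟨hq, hdvd⟩
    obtain ⟨p, hp, hqp⟩ := (Prime.dvd_finsetProd_iff hq.prime _).1 hdvd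
    rwa [(Nat.prime_dvd_prime_iff_eq hq (h p hp).1).1 (hq.dvd_of_dvd_pow hqp)]
  · intro hq
    exact ⟨(h q hq).1, (dvd_pow_self q (h q hq).2).trans (dvd_prod_of_mem _ hq)⟩

theorem primeFactors_prod_ordProj {n : ℕ} {S : Finset ℕ} (hS : S ⊆ n.primeFactors) :
    (∏ p ∈ S, ordProj[p] n).primeFactors = S :=
  primeFactors_prod_pow fun p hp =>
    ⟨Nat.prime_of_mem_primeFactors (hS hp),
      Finsupp.mem_support_iff.1 (by rw [Nat.support_factorization]; exact hS hp)⟩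

theorem sum_unitaryDivisors_mustar {n : ℕ} (hn : n ≠ 0) :
    ∑ d ∈ unitaryDivisors n, mustar d = if n = 1 then 1 else 0 := by
  have hpowerset : ∑ d ∈ unitaryDivisors n, mustar d =
      ∑ S ∈ n.primeFactors.powerset, (-1 : ℤ) ^ S.card := by
    refine sum_nbij' Nat.primeFactors (fun S => ∏ p ∈ S, ordProj[p] n)
      (fun d hd => mem_powerset.2 (Nat.primeFactors_mono (mem_unitaryDivisors.1 hd).1.1 hn))
      (fun S hS => mem_unitaryDivisors.2 ⟨unitaryDvd_prod_ordProj (mem_powerset.1 hS) hn, hn⟩)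
      (fun d hd => (mem_unitaryDivisors.1 hd).1.prod_primeFactors_ordProj hn)
      (fun S hS => primeFactors_prod_ordProj (mem_powerset.1 hS)) (fun _ _ => rfl)
  rw [hpowerset, sum_powerset_neg_one_pow_card]
  simp [Nat.primeFactors_eq_empty, hn]

theorem sum_mustar_unitary_general (i j : ℕ) (hj : 0 < j) :
    ∑ d ∈ (Nat.divisors j).filter (fun d => UnitaryDvd d j ∧ UnitaryDvd i (j / d)),
      mustar d = if i = j then 1 else 0 := by
  simp only [unitaryDvd_and_unitaryDvd_div_comm hj.ne']
  by_cases hij : UnitaryDvd i j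
  · have hi : 0 < i := Nat.pos_of_dvd_of_pos hij.1 hj
    simp only [hij, true_and]
    rw [filter_divisors_unitaryDvd_of_dvd (Nat.div_dvd_of_dvd hij.1) hj.ne',
      sum_unitaryDivisors_mustar (Nat.div_ne_zero_iff_of_dvd hij.1 |>.2 ⟨hj.ne', hi.ne'⟩)]
    simp only [Nat.div_eq_iff_eq_mul_left hi hij.1, one_mul, @eq_comm _ j i]
  · have hne : i ≠ j := by rintro rfl; exact hij (unitaryDvd_self hj.ne')
    rw [filter_false_of_mem fun d _ h => hij h.1, sum_empty, if_neg hne]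

theorem sum_mustar_unitary (i j : ℕ) (hi : 0 < i) (hj : 0 < j) :
    ∑ d ∈ (Nat.divisors j).filter (fun d => UnitaryDvd d j ∧ UnitaryDvd i (j / d)),
      mustar d = if i = j then 1 else 0 :=
  sum_mustar_unitary_general i j hj
end

section
/- For integers 1 ≤ i ≤ n, Σ_{k ≤ n, i ∥ k} M*(n/k, k) = 1, where M*(x, k) = Σ_{d ≤ x, gcd(d,k)=1} μ*(d). -/
/-- `M*(x, k) = ∑_{d ≤ x, gcd(d,k)=1} μ*(d)`. -/
noncomputable def Mstar (x k : ℕ) : ℤ :=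
  ∑ d ∈ (Finset.Icc 1 x).filter (fun d => Nat.Coprime d k), mustar d
/-! Writing `k = i a` with `gcd(i, a) = 1` and collecting the pairs `(a, d)` with `a d = t`, the
conditions `gcd(d, i a) = 1` become `gcd(t, i) = 1` and `gcd(a, d) = 1`, so the sum is
`∑_{t ≤ n/i, gcd(t, i) = 1} ∑_{d ∥ t} μ*(d)`. The unitary divisors of `t` correspond to the
subsets of its prime factors via `d ↦ primeFactors d`, so the inner sum is
`∑_{T ⊆ primeFactors t} (-1)^|T| = [t = 1]`, and only `t = 1` survives. -/

open Finset Nat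

def unitaryPart (t : ℕ) (T : Finset ℕ) : ℕ := ∏ p ∈ T, ordProj[p] t

lemma factorization_ordProj (n p : ℕ) :
    (ordProj[p] n).factorization = Finsupp.single p (n.factorization p) := by
  by_cases hp : p.Prime
  · exact hp.factorization_pow
  · simp [factorization_eq_zero_of_not_prime n hp]

lemma unitaryPart_ne_zero (t : ℕ) (T : Finset ℕ) : unitaryPart t T ≠ 0 :=
  prod_ne_zero_iff.mpr fun p _ ↦ (ordProj_pos t p).ne'

lemma factorization_unitaryPart (t : ℕ) (T : Finset ℕ) (p : ℕ) :
    (unitaryPart t T).factorization p = if p ∈ T then t.factorization p else 0 := by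
  rw [unitaryPart, factorization_prod fun q _ ↦ (ordProj_pos t q).ne', Finsupp.finsetSum_apply]
  simp only [factorization_ordProj, Finsupp.single_apply]
  exact sum_ite_eq' T p _

lemma primeFactors_unitaryPart {t : ℕ} {T : Finset ℕ} (hT : T ⊆ t.primeFactors) :
    (unitaryPart t T).primeFactors = T := by
  ext p
  rw [← support_factorization, Finsupp.mem_support_iff, factorization_unitaryPart]
  split_ifs with hp
  · simpa [hp] using Finsupp.mem_support_iff.mp (hT hp)
  · simpa using hp

lemma unitaryDvd_unitaryPart {t : ℕ} (ht : t ≠ 0) {T : Finset ℕ} (hT : T ⊆ t.primeFactors) :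
    UnitaryDvd (unitaryPart t T) t := by
  have hdvd : unitaryPart t T ∣ t := by
    rw [← factorization_le_iff_dvd (unitaryPart_ne_zero t T) ht]
    intro p
    rw [factorization_unitaryPart]
    split_ifs <;> simp
  refine ⟨hdvd, (disjoint_primeFactors (unitaryPart_ne_zero t T) ?_).mp ?_⟩
  · exact (Nat.div_ne_zero_iff_of_dvd hdvd).mpr ⟨ht, unitaryPart_ne_zero t T⟩
  · rw [primeFactors_unitaryPart hT, disjoint_left]
    intro p hp
    rw [← support_factorization, Finsupp.mem_support_iff, factorization_div hdvd]
    simp [factorization_unitaryPart, hp]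

lemma unitaryPart_primeFactors {d t : ℕ} (ht : t ≠ 0) (h : UnitaryDvd d t) :
    unitaryPart t d.primeFactors = d := by
  have hd : d ≠ 0 := ne_zero_of_dvd_ne_zero ht h.1
  refine eq_of_factorization_eq (unitaryPart_ne_zero _ _) hd fun p ↦ ?_
  rw [factorization_unitaryPart]
  split_ifs with hp
  · conv_lhs => rw [← Nat.mul_div_cancel' h.1]
    exact factorization_eq_of_coprime_left h.2 (mem_primeFactors_iff_mem_primeFactorsList.mp hp)
  · exact (Finsupp.notMem_support_iff.mp hp).symm

theorem sum_mustar_unitaryDivisors (t : ℕ) :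
    ∑ d ∈ t.divisors with Coprime d (t / d), mustar d = if t = 1 then 1 else 0 := by
  rcases eq_or_ne t 0 with rfl | ht
  · simp
  have hempty : (if t = 1 then (1 : ℤ) else 0) = if t.primeFactors = ∅ then 1 else 0 := by
    simp [ht]
  rw [hempty, ← sum_powerset_neg_one_pow_card]
  refine sum_nbij' primeFactors (unitaryPart t) ?_ ?_ ?_ ?_ fun _ _ ↦ rfl
  · intro d hd
    simp only [mem_filter, mem_divisors] at hd
    exact mem_powerset.mpr (primeFactors_mono hd.1.1 ht)
  · intro T hT
    obtain ⟨hdvd, hcop⟩ := unitaryDvd_unitaryPart ht (mem_powerset.mp hT)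
    exact mem_filter.mpr ⟨mem_divisors.mpr ⟨hdvd, ht⟩, hcop⟩
  · intro d hd
    simp only [mem_filter, mem_divisors] at hd
    exact unitaryPart_primeFactors ht ⟨hd.1.1, hd.2⟩
  · intro T hT
    exact primeFactors_unitaryPart (mem_powerset.mp hT)

theorem sum_Icc_sum_Icc_div_eq_sum_divisorsAntidiagonal {M : Type*} [AddCommMonoid M]
    (N : ℕ) (f : ℕ → ℕ → M) :
    ∑ a ∈ Icc 1 N, ∑ b ∈ Icc 1 (N / a), f a b =
      ∑ t ∈ Icc 1 N, ∑ x ∈ t.divisorsAntidiagonal, f x.1 x.2 := by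
  rw [sum_sigma', sum_sigma']
  refine sum_nbij' (fun x ↦ ⟨x.1 * x.2, (x.1, x.2)⟩) (fun y ↦ ⟨y.2.1, y.2.2⟩) ?_ ?_
    (fun _ _ ↦ rfl) ?_ fun _ _ ↦ rfl
  · rintro ⟨a, b⟩ hx
    simp only [mem_sigma, mem_Icc] at hx
    have hab : a * b ≤ N := by
      rw [mul_comm]; exact (Nat.le_div_iff_mul_le (by omega)).mp hx.2.2
    have hpos : 0 < a * b := Nat.mul_pos (by omega) (by omega)
    exact mem_sigma.mpr ⟨mem_Icc.mpr ⟨hpos, hab⟩, mem_divisorsAntidiagonal.mpr ⟨rfl, hpos.ne'⟩⟩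
  · rintro ⟨t, a, b⟩ hy
    simp only [mem_sigma, mem_Icc, mem_divisorsAntidiagonal] at hy
    obtain ⟨⟨ht1, htN⟩, rfl, -⟩ := hy
    have ha : 0 < a := Nat.pos_of_mul_pos_right ht1
    have hb : 0 < b := Nat.pos_of_mul_pos_left ht1
    refine mem_sigma.mpr ⟨mem_Icc.mpr ⟨ha, (Nat.le_mul_of_pos_right a hb).trans htN⟩,
      mem_Icc.mpr ⟨hb, ?_⟩⟩
    rwa [Nat.le_div_iff_mul_le ha, mul_comm]
  · rintro ⟨t, a, b⟩ hy
    simp only [mem_sigma, mem_divisorsAntidiagonal] at hy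
    rw [← hy.2.1]

lemma filter_unitaryDvd_Icc {i : ℕ} (hi : i ≠ 0) (n : ℕ) :
    {k ∈ Icc 1 n | UnitaryDvd i k} = {a ∈ Icc 1 (n / i) | Coprime i a}.image (i * ·) := by
  ext k
  simp only [mem_filter, mem_Icc, mem_image]
  constructor
  · rintro ⟨⟨hk1, hkn⟩, ⟨a, rfl⟩, hcop⟩
    rw [Nat.mul_div_cancel_left a (Nat.pos_of_ne_zero hi)] at hcop
    refine ⟨a, ⟨⟨Nat.pos_of_mul_pos_left hk1, ?_⟩, hcop⟩, rfl⟩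
    rwa [Nat.le_div_iff_mul_le (Nat.pos_of_ne_zero hi), mul_comm]
  · rintro ⟨a, ⟨⟨ha1, han⟩, hcop⟩, rfl⟩
    refine ⟨⟨Nat.mul_pos (Nat.pos_of_ne_zero hi) ha1, ?_⟩, ⟨dvd_mul_right i a, ?_⟩⟩
    · rwa [Nat.le_div_iff_mul_le (Nat.pos_of_ne_zero hi), mul_comm] at han
    · rwa [Nat.mul_div_cancel_left a (Nat.pos_of_ne_zero hi)]

lemma sum_divisorsAntidiagonal_mustar_coprime_mul (i t : ℕ) :
    ∑ x ∈ t.divisorsAntidiagonal,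
      (if Coprime i x.1 ∧ Coprime x.2 (i * x.1) then mustar x.2 else 0) =
      if t = 1 then 1 else 0 := by
  have hcond : ∀ x ∈ t.divisorsAntidiagonal,
      (Coprime i x.1 ∧ Coprime x.2 (i * x.1) ↔ Coprime i t ∧ Coprime x.2 x.1) := by
    intro x hx
    rw [← (mem_divisorsAntidiagonal.mp hx).1, coprime_mul_iff_right, coprime_mul_iff_right,
      coprime_comm (m := x.2)]
    tauto
  rw [sum_congr rfl fun x hx ↦ if_congr (hcond x hx) rfl rfl]
  simp only [ite_and, sum_ite_irrel, sum_const_zero]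
  rw [Nat.sum_divisorsAntidiagonal' (fun a d ↦ if Coprime d a then mustar d else 0), ← sum_filter,
    sum_mustar_unitaryDivisors]
  rcases eq_or_ne t 1 with rfl | ht <;> simp [*]

theorem sum_Mstar_unitary (i n : ℕ) (hi : 1 ≤ i) (hin : i ≤ n) :
    ∑ k ∈ (Finset.Icc 1 n).filter (fun k => UnitaryDvd i k), Mstar (n / k) k = 1 := by
  have hi0 : i ≠ 0 := by omega
  calc ∑ k ∈ Icc 1 n with UnitaryDvd i k, Mstar (n / k) k
      = ∑ a ∈ Icc 1 (n / i) with Coprime i a, Mstar (n / i / a) (i * a) := by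
        rw [filter_unitaryDvd_Icc hi0, sum_image (mul_right_injective₀ hi0).injOn]
        simp_rw [Nat.div_div_eq_div_mul]
    _ = ∑ a ∈ Icc 1 (n / i), ∑ d ∈ Icc 1 (n / i / a),
          if Coprime i a ∧ Coprime d (i * a) then mustar d else 0 := by
        simp only [Mstar, sum_filter, ite_and, sum_ite_irrel, sum_const_zero]
    _ = ∑ t ∈ Icc 1 (n / i), if t = 1 then 1 else 0 := by
        rw [sum_Icc_sum_Icc_div_eq_sum_divisorsAntidiagonal]
        exact sum_congr rfl fun t _ ↦ sum_divisorsAntidiagonal_mustar_coprime_mul i t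
    _ = 1 := by
        rw [sum_ite_eq', if_pos (mem_Icc.mpr ⟨le_rfl, (Nat.one_le_div_iff (by omega)).mpr hin⟩)]
end

section
/- Define k_1 = 0 and k_n = max(k_{n-1}, ω(n)+1) for n ≥ 2. For n ≥ 2, k_n is the unique positive integer such that N_{k_n - 1} ≤ n < N_{k_n}, where N_k = p_1 p_2 ⋯ p_k is the product of the first k primes (the k-th primorial), with N_0 = 1. -/
/-- The sequence `k_1 = 0`, `k_n = max (k_{n-1}) (ω(n) + 1)` for `n ≥ 2`. -/
def kseq : ℕ → ℕ
  | 0 => 0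
  | 1 => 0
  | n + 2 => max (kseq (n + 1)) ((n + 2).primeFactors.card + 1)

/-- `N_k`, the product of the first `k` primes (the `k`-th primorial), `N_0 = 1`. -/
noncomputable def primorialSeq (k : ℕ) : ℕ := ∏ i ∈ Finset.range k, Nat.nth Nat.Prime i

/-!
A product of `j` distinct primes is at least `N_j`, since its `i`-th smallest factor is at least
`p_{i+1}`; hence `N_{ω(m)} ≤ m`, with equality at `m = N_j`. Unfolding the recursion,
`k_n = 1 + max_{2 ≤ m ≤ n} ω(m)`, so `N_j ≤ n ↔ j < k_n`, which is the claimed characterisation.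
-/

open Finset

lemma primorialSeq_succ (k : ℕ) :
    primorialSeq (k + 1) = primorialSeq k * Nat.nth Nat.Prime k :=
  prod_range_succ _ k

lemma primorialSeq_one : primorialSeq 1 = 2 := by
  rw [primorialSeq, prod_range_one, Nat.nth_prime_zero_eq_two]

lemma primorialSeq_mono : Monotone primorialSeq := fun _ _ hab =>
  prod_le_prod_of_subset_of_one_le' (range_subset_range.2 hab)
    fun i _ _ => (Nat.prime_nth_prime i).one_le

lemma primorialSeq_card_le_prod {s : Finset ℕ} (hs : ∀ p ∈ s, p.Prime) :
    primorialSeq #s ≤ ∏ p ∈ s, p := by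
  induction s using Finset.induction_on_max with
  | empty => simp [primorialSeq]
  | insert a s hlt ih =>
    have ha : a.Prime := hs a (mem_insert_self a s)
    have has : a ∉ s := fun h => (hlt a h).false
    have hcount : #s ≤ Nat.count Nat.Prime a := by
      rw [Nat.count_eq_card_filter_range]
      exact card_le_card fun p hp => mem_filter.2
        ⟨mem_range.2 (hlt p hp), hs p (mem_insert_of_mem hp)⟩
    have hnth : Nat.nth Nat.Prime #s ≤ a :=
      Nat.nth_count ha ▸ (Nat.nth_le_nth Nat.infinite_setOfPred_prime).2 hcount
    rw [card_insert_of_notMem has, prod_insert has, primorialSeq_succ, mul_comm]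
    exact Nat.mul_le_mul hnth (ih fun p hp => hs p (mem_insert_of_mem hp))

lemma primorialSeq_card_primeFactors_le {m : ℕ} (hm : m ≠ 0) :
    primorialSeq #m.primeFactors ≤ m :=
  (primorialSeq_card_le_prod fun _ => Nat.prime_of_mem_primeFactors).trans
    (Nat.le_of_dvd (Nat.pos_of_ne_zero hm) (Nat.prod_primeFactors_dvd m))

lemma card_primeFactors_primorialSeq (k : ℕ) : #(primorialSeq k).primeFactors = k := by
  have hinj : Set.InjOn (Nat.nth Nat.Prime) (range k) :=
    (Nat.nth_injective Nat.infinite_setOfPred_prime).injOn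
  have hprod : primorialSeq k = ∏ p ∈ (range k).image (Nat.nth Nat.Prime), p :=
    (prod_image (f := fun p => p) fun _ hi _ hj h => hinj hi hj h).symm
  rw [hprod, Nat.primeFactors_prod fun p hp => ?_, card_image_of_injOn hinj, card_range]
  obtain ⟨i, -, rfl⟩ := mem_image.1 hp
  exact Nat.prime_nth_prime i

lemma kseq_eq_sup (n : ℕ) : kseq n = (Icc 2 n).sup fun m => #m.primeFactors + 1 := by
  induction n using Nat.strongRecOn with
  | ind n ih =>
    match n with
    | 0 | 1 => rfl
    | n + 2 =>
      have hIcc : insert (n + 2) (Icc 2 (n + 1)) = Icc 2 (n + 2) :=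
        insert_Icc_right_eq_Icc_add_one (by omega)
      rw [kseq, ih (n + 1) (by omega), ← hIcc, sup_insert, max_comm]

lemma primorialSeq_le_iff_lt_kseq {n k : ℕ} (hn : 2 ≤ n) : primorialSeq k ≤ n ↔ k < kseq n := by
  rw [kseq_eq_sup, Finset.lt_sup_iff]
  constructor
  · intro hk
    rcases Nat.eq_zero_or_pos k with rfl | hk0
    · exact ⟨n, mem_Icc.2 ⟨hn, le_rfl⟩, Nat.succ_pos _⟩
    have htwo : 2 ≤ primorialSeq k := primorialSeq_one ▸ primorialSeq_mono hk0
    refine ⟨primorialSeq k, mem_Icc.2 ⟨htwo, hk⟩, ?_⟩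
    rw [card_primeFactors_primorialSeq]
    exact Nat.lt_succ_self k
  · rintro ⟨m, hm, hk⟩
    obtain ⟨hm2, hmn⟩ := mem_Icc.1 hm
    calc primorialSeq k ≤ primorialSeq #m.primeFactors := primorialSeq_mono (Nat.le_of_lt_succ hk)
      _ ≤ m := primorialSeq_card_primeFactors_le (by omega)
      _ ≤ n := hmn

theorem kseq_unique_primorial (n : ℕ) (hn : 2 ≤ n) :
    0 < kseq n ∧ primorialSeq (kseq n - 1) ≤ n ∧ n < primorialSeq (kseq n) ∧
      ∀ k : ℕ, 0 < k → primorialSeq (k - 1) ≤ n → n < primorialSeq k → k = kseq n := by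
  have key (k : ℕ) : primorialSeq k ≤ n ↔ k < kseq n := primorialSeq_le_iff_lt_kseq hn
  have hpos : 0 < kseq n := (key 0).1 (by rw [primorialSeq, prod_range_zero]; omega)
  refine ⟨hpos, (key _).2 (by omega), not_le.1 fun h => ((key _).1 h).false, ?_⟩
  intro k hk hlow hhigh
  have hlt : k - 1 < kseq n := (key _).1 hlow
  have hge : ¬k < kseq n := (key k).not.1 (not_le.2 hhigh)
  omega
end
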